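/- Recursive feasibility under a terminal set satisfying Assumption 3 (second claim of Theorem 1): Assume σ_{s,o} is monotonically increasing, S_f is monotone in the bound components (if (x̄, ē, s̄) ∈ S_f and 0 ≤ ē' ≤ ē, 0 ≤ s̄' ≤ s̄, then (x̄, ē', s̄') ∈ S_f), and S_f satisfies the one-step terminal property of Assumption 3 with terminal controller π_f. Suppose (x̄_0, (ū_0, …, ū_{N−1})) is feasible for the RPOF-SF problem at estimate x̂ with bound ē and horizon N ≥ 1, and the next-step estimate x̂' and bound ē' satisfy ē' ≤ ρ_o · ē + σ_{o,w}(w̄) and V_s(x̄_1, x̂') ≤ ρ_s · V_s(x̄_0, x̂) + σ_{s,o}(ē) + σ_{s,o,w}(w̄), where x̄_1 = f(x̄_0, ū_0). Then the extended shifted candidate (x̄_1, (ū_1, …, ū_{N−1}, π_f(x̄_N))), where x̄_N is the terminal nominal state of the original candidate, is feasible at estimate x̂' with bound ē' and the full horizon N. -/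

import Mathlib

/-- A vector in `ℝ^n`. -/
abbrev Vec (n : ℕ) := EuclideanSpace ℝ (Fin n)

/-- A class-`𝒦` function: continuous, strictly increasing and vanishing at `0`
(considered on the nonnegative reals). -/
def ClassK (σ : ℝ → ℝ) : Prop :=
  ContinuousOn σ (Set.Ici 0) ∧ StrictMonoOn σ (Set.Ici 0) ∧ σ 0 = 0

/-- The nominal trajectory `x̄_{i+1} = f(x̄_i, ū_i)` from initial state `x0`. -/
def nomTraj {X U : Type*} (f : X → U → X) (x0 : X) (u : ℕ → U) : ℕ → X
  | 0 => x0
  | i + 1 => f (nomTraj f x0 u i) (u i)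

/-- The propagated estimation-error bound
`ē_j = ρ_o^j ē + ((1 − ρ_o^j)/(1 − ρ_o)) σ_{o,w}(w̄)` (here `g = σ_{o,w}(w̄)`). -/
noncomputable def ebarSeq (ρo g e : ℝ) (j : ℕ) : ℝ :=
  ρo ^ j * e + ((1 - ρo ^ j) / (1 - ρo)) * g

/-- The scalar tube sizes `s̄_0 = s0`, `s̄_{i+1} = ρ_s s̄_i + σ_{s,o}(ē_i) + σ_{s,o,w}(w̄)`. -/
noncomputable def tubeSeq (ρs : ℝ) (σso σsow : ℝ → ℝ) (wbar s0 : ℝ) (e : ℕ → ℝ) : ℕ → ℝ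
  | 0 => s0
  | i + 1 => ρs * tubeSeq ρs σso σsow wbar s0 e i + σso (e i) + σsow wbar

/-- Feasibility predicate for the RPOF-SF open-loop problem (19): given horizon `N`,
state estimate `x̂` and estimation-error bound `ē`, a nominal initial state `x̄_0` and
inputs `ū_0, …, ū_{N−1}` are feasible if, with `x̄_{i+1} = f(x̄_i, ū_i)`,
`ē_j = ρ_o^j ē + ((1 − ρ_o^j)/(1 − ρ_o)) σ_{o,w}(w̄)`, `s̄_0 = V_s(x̄_0, x̂)` and
`s̄_{i+1} = ρ_s s̄_i + σ_{s,o}(ē_i) + σ_{s,o,w}(w̄)`: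
(i) for every `i < N` and all `z, ẑ` with `V_s(x̄_i, ẑ) ≤ s̄_i` and `V_o(ẑ, z) ≤ ē_i`,
`(z, π(ẑ, x̄_i, ū_i)) ∈ Z`; and (ii) `(x̄_N, ē_N, s̄_N) ∈ S_f`. -/
def Feasible {nx m : ℕ}
    (f : Vec nx → Vec m → Vec nx)
    (Vs Vo : Vec nx → Vec nx → ℝ)
    (ρo ρs wbar : ℝ)
    (σow σso σsow : ℝ → ℝ)
    (π : Vec nx → Vec nx → Vec m → Vec m)
    (Z : Set (Vec nx × Vec m))
    (Sf : Set (Vec nx × ℝ × ℝ))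
    (N : ℕ) (xhat : Vec nx) (e : ℝ)
    (xbar0 : Vec nx) (ubar : ℕ → Vec m) : Prop :=
  (∀ i < N, ∀ z zhat : Vec nx,
      Vs (nomTraj f xbar0 ubar i) zhat
        ≤ tubeSeq ρs σso σsow wbar (Vs xbar0 xhat) (ebarSeq ρo (σow wbar) e) i →
      Vo zhat z ≤ ebarSeq ρo (σow wbar) e i →
      (z, π zhat (nomTraj f xbar0 ubar i) (ubar i)) ∈ Z) ∧
  (nomTraj f xbar0 ubar N, ebarSeq ρo (σow wbar) e N,
    tubeSeq ρs σso σsow wbar (Vs xbar0 xhat) (ebarSeq ρo (σow wbar) e) N) ∈ Sf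

/-! The shifted candidate follows the old nominal trajectory one step ahead, and its error
bounds and tube sizes are dominated by the old ones one step ahead: both recursions are
monotone in their data, and the new initial data are bounded by the old data after one step
(`σ_{s,o}` being monotone). Hence the old constraints cover the first `N − 1` steps, while the
last step and the new terminal triple are covered by Assumption 3 at the old terminal triple. -/

lemma ClassK.monotoneOn {σ : ℝ → ℝ} (hσ : ClassK σ) : MonotoneOn σ (Set.Ici 0) :=
  hσ.2.1.monotoneOn

lemma ClassK.nonneg {σ : ℝ → ℝ} (hσ : ClassK σ) {x : ℝ} (hx : 0 ≤ x) : 0 ≤ σ x := by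
  simpa [hσ.2.2] using hσ.monotoneOn Set.self_mem_Ici hx hx

section ebarSeq

variable {ρ g : ℝ}

lemma ebarSeq_zero (e : ℝ) : ebarSeq ρ g e 0 = e := by
  simp [ebarSeq]

lemma ebarSeq_succ (hρ : ρ ≠ 1) (e : ℝ) (j : ℕ) :
    ebarSeq ρ g e (j + 1) = ρ * ebarSeq ρ g e j + g := by
  have : (1 : ℝ) - ρ ≠ 0 := sub_ne_zero.mpr hρ.symm
  simp only [ebarSeq, pow_succ]
  field_simp
  ring

lemma ebarSeq_nonneg (hρ0 : 0 ≤ ρ) (hρ1 : ρ ≠ 1) (hg : 0 ≤ g) {e : ℝ} (he : 0 ≤ e) (j : ℕ) :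
    0 ≤ ebarSeq ρ g e j := by
  induction j with
  | zero => rwa [ebarSeq_zero]
  | succ j ih =>
    rw [ebarSeq_succ hρ1]
    exact add_nonneg (mul_nonneg hρ0 ih) hg

lemma ebarSeq_le_succ (hρ0 : 0 ≤ ρ) (hρ1 : ρ ≠ 1) {e e' : ℝ} (he' : e' ≤ ρ * e + g) (j : ℕ) :
    ebarSeq ρ g e' j ≤ ebarSeq ρ g e (j + 1) := by
  induction j with
  | zero => rwa [ebarSeq_zero, ebarSeq_succ hρ1, ebarSeq_zero]
  | succ j ih =>
    rw [ebarSeq_succ hρ1 e', ebarSeq_succ hρ1 e (j + 1)]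
    gcongr

end ebarSeq

lemma tubeSeq_le_succ {ρs : ℝ} (hρs : 0 ≤ ρs) {σso : ℝ → ℝ} (σsow : ℝ → ℝ) (wbar : ℝ)
    {s0 s0' : ℝ} {e1 e2 : ℕ → ℝ} (hs0 : s0' ≤ tubeSeq ρs σso σsow wbar s0 e2 1)
    (hσ : ∀ j, σso (e1 j) ≤ σso (e2 (j + 1))) (j : ℕ) :
    tubeSeq ρs σso σsow wbar s0' e1 j ≤ tubeSeq ρs σso σsow wbar s0 e2 (j + 1) := by
  induction j with
  | zero => exact hs0
  | succ j ih =>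
    rw [tubeSeq, tubeSeq]
    gcongr
    exact hσ j

lemma nomTraj_shift {X U : Type*} (f : X → U → X) (x0 : X) {u u' : ℕ → U} {N : ℕ}
    (hu' : ∀ i, i + 1 < N → u' i = u (i + 1)) :
    ∀ i < N, nomTraj f (f x0 (u 0)) u' i = nomTraj f x0 u (i + 1)
  | 0, _ => rfl
  | i + 1, hi => by
    rw [nomTraj, nomTraj_shift f x0 hu' i (by omega), hu' i hi]
    rfl

theorem recursive_feasibility_terminal_set_general
    {nx m : ℕ}
    (f : Vec nx → Vec m → Vec nx)
    (Vs Vo : Vec nx → Vec nx → ℝ)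
    (ρo ρs : ℝ) (hρo : ρo ∈ Set.Ioo (0 : ℝ) 1) (hρs : ρs ∈ Set.Ioo (0 : ℝ) 1)
    (wbar : ℝ) (hwbar : 0 ≤ wbar)
    (σow σso σsow : ℝ → ℝ)
    (hσow : ClassK σow) (hσso : ClassK σso)
    (π : Vec nx → Vec nx → Vec m → Vec m)
    (Z : Set (Vec nx × Vec m))
    (Sf : Set (Vec nx × ℝ × ℝ))
    -- Assumption 3: one-step terminal property of `S_f` with terminal controller `π_f`
    (πf : Vec nx → Vec m)
    (hterm : ∀ (xb : Vec nx) (e s : ℝ), (xb, e, s) ∈ Sf →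
      (∀ x xhat : Vec nx, Vs xb xhat ≤ s → Vo xhat x ≤ e →
        (x, π xhat xb (πf xb)) ∈ Z) ∧
      (∀ e' s' : ℝ, e' ≤ ρo * e + σow wbar →
        s' ≤ ρs * s + σso e + σsow wbar → (f xb (πf xb), e', s') ∈ Sf))
    (N : ℕ) (hN : 1 ≤ N)
    (xhat : Vec nx) (e : ℝ)
    (xbar0 : Vec nx) (ubar : ℕ → Vec m)
    (hfeas : Feasible f Vs Vo ρo ρs wbar σow σso σsow π Z Sf N xhat e xbar0 ubar)
    (xhat' : Vec nx) (e' : ℝ) (he'_nonneg : 0 ≤ e')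
    (he' : e' ≤ ρo * e + σow wbar)
    (hVs' : Vs (f xbar0 (ubar 0)) xhat'
      ≤ ρs * Vs xbar0 xhat + σso e + σsow wbar) :
    Feasible f Vs Vo ρo ρs wbar σow σso σsow π Z Sf N xhat' e'
      (f xbar0 (ubar 0))
      (fun i => if i + 1 < N then ubar (i + 1)
        else πf (nomTraj f xbar0 ubar N)) := by
  obtain ⟨hcons, hSfN⟩ := hfeas
  obtain ⟨hZN, hSfN'⟩ := hterm _ _ _ hSfN
  have htraj := nomTraj_shift f xbar0 (u' := fun i => if i + 1 < N then ubar (i + 1)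
    else πf (nomTraj f xbar0 ubar N)) fun i h => if_pos h
  have herr := ebarSeq_le_succ hρo.1.le hρo.2.ne he'
  have herr_nonneg := ebarSeq_nonneg hρo.1.le hρo.2.ne (hσow.nonneg hwbar) he'_nonneg
  have htube := tubeSeq_le_succ hρs.1.le σsow wbar
    (by simpa only [tubeSeq, ebarSeq_zero] using hVs')
    fun j => hσso.monotoneOn (herr_nonneg j) ((herr_nonneg j).trans (herr j)) (herr j)
  refine ⟨fun i hi z zhat hz hzhat => ?_, ?_⟩
  · rw [htraj i hi] at hz ⊢
    by_cases hlast : i + 1 < N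
    · simpa only [if_pos hlast] using
        hcons (i + 1) hlast z zhat (hz.trans (htube i)) (hzhat.trans (herr i))
    · obtain rfl : i + 1 = N := by omega
      simpa only [if_neg hlast] using hZN z zhat (hz.trans (htube i)) (hzhat.trans (herr i))
  · obtain ⟨M, rfl⟩ : ∃ M, N = M + 1 := ⟨N - 1, by omega⟩
    rw [nomTraj, htraj M M.lt_succ_self, if_neg (lt_irrefl _)]
    exact hSfN' _ _ ((herr _).trans_eq (ebarSeq_succ hρo.2.ne _ _)) (htube _)

/-- Recursive feasibility under a terminal set satisfying Assumption 3 (second claim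
of Theorem 1): if `(x̄_0, (ū_0, …, ū_{N−1}))` is feasible at estimate `x̂` with bound
`ē` and horizon `N ≥ 1`, and the next-step estimate `x̂'` and bound `ē'` satisfy
`ē' ≤ ρ_o ē + σ_{o,w}(w̄)` and
`V_s(x̄_1, x̂') ≤ ρ_s V_s(x̄_0, x̂) + σ_{s,o}(ē) + σ_{s,o,w}(w̄)` with
`x̄_1 = f(x̄_0, ū_0)`, then the extended shifted candidate
`(x̄_1, (ū_1, …, ū_{N−1}, π_f(x̄_N)))`, where `x̄_N` is the terminal nominal state of
the original candidate, is feasible at `x̂'` with bound `ē'` and the full horizon `N`. -/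
theorem recursive_feasibility_terminal_set
    {nx m : ℕ}
    (f : Vec nx → Vec m → Vec nx)
    (Vs Vo : Vec nx → Vec nx → ℝ)
    (hVs_nonneg : ∀ a b, 0 ≤ Vs a b) (hVo_nonneg : ∀ a b, 0 ≤ Vo a b)
    (ρo ρs : ℝ) (hρo : ρo ∈ Set.Ioo (0 : ℝ) 1) (hρs : ρs ∈ Set.Ioo (0 : ℝ) 1)
    (wbar : ℝ) (hwbar : 0 ≤ wbar)
    (σow σso σsow : ℝ → ℝ)
    (hσow : ClassK σow) (hσso : ClassK σso) (hσsow : ClassK σsow)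
    (π : Vec nx → Vec nx → Vec m → Vec m)
    (Z : Set (Vec nx × Vec m))
    (Sf : Set (Vec nx × ℝ × ℝ))
    -- `S_f` is monotone in the bound components
    (hSf_mono : ∀ (xb : Vec nx) (e s e' s' : ℝ), (xb, e, s) ∈ Sf →
      0 ≤ e' → e' ≤ e → 0 ≤ s' → s' ≤ s → (xb, e', s') ∈ Sf)
    -- Assumption 3: one-step terminal property of `S_f` with terminal controller `π_f`
    (πf : Vec nx → Vec m)
    (hterm : ∀ (xb : Vec nx) (e s : ℝ), (xb, e, s) ∈ Sf →
      (∀ x xhat : Vec nx, Vs xb xhat ≤ s → Vo xhat x ≤ e →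
        (x, π xhat xb (πf xb)) ∈ Z) ∧
      (∀ e' s' : ℝ, e' ≤ ρo * e + σow wbar →
        s' ≤ ρs * s + σso e + σsow wbar → (f xb (πf xb), e', s') ∈ Sf))
    (N : ℕ) (hN : 1 ≤ N)
    (xhat : Vec nx) (e : ℝ) (he_nonneg : 0 ≤ e)
    (xbar0 : Vec nx) (ubar : ℕ → Vec m)
    (hfeas : Feasible f Vs Vo ρo ρs wbar σow σso σsow π Z Sf N xhat e xbar0 ubar)
    (xhat' : Vec nx) (e' : ℝ) (he'_nonneg : 0 ≤ e')
    (he' : e' ≤ ρo * e + σow wbar)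
    (hVs' : Vs (f xbar0 (ubar 0)) xhat'
      ≤ ρs * Vs xbar0 xhat + σso e + σsow wbar) :
    Feasible f Vs Vo ρo ρs wbar σow σso σsow π Z Sf N xhat' e'
      (f xbar0 (ubar 0))
      (fun i => if i + 1 < N then ubar (i + 1)
        else πf (nomTraj f xbar0 ubar N)) :=
  recursive_feasibility_terminal_set_general f Vs Vo ρo ρs hρo hρs wbar hwbar σow σso σsow hσow hσso
    π Z Sf πf hterm N hN xhat e xbar0 ubar hfeas xhat' e' he'_nonneg he' hVs'
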